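/- arXiv:2502.01211 — 3 statements merged into one kernel-verified Lean document; each statement's English description precedes it below -/
import Mathlib

section
/- Let k ≥ 1, let X be a type, let π̂, φ̂ : X → ℝ, let x x̃ : X, and let w : Finset (Fin k) → X satisfy w(∅) = x and w(univ) = x̃. Define γ_j = ∑_{S ⊆ univ \ {j}} (|S|! (k − |S| − 1)! / k!) (π̂(w(S)) − π̂(w(S ∪ {j}))) for each j ∈ Fin k, and the local intercept δ₀ = π̂(x̃) − φ̂(x̃). Then the privilege score satisfies π̂(x) − φ̂(x̃) = ∑_{j ∈ Fin k} γ_j + δ₀. -/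
open Finset

lemma shapley_eff {k : ℕ} (hk : 1 ≤ k) (g : Finset (Fin k) → ℝ) :
    (∑ j : Fin k, ∑ S ∈ (Finset.univ \ {j}).powerset,
        ((S.card.factorial * (k - S.card - 1).factorial : ℝ) / (k.factorial : ℝ)) *
          (g S - g (insert j S)))
      = g ∅ - g Finset.univ := by
  classical
  set c : ℕ → ℝ := fun t => ((t.factorial * (k - t - 1).factorial : ℕ) : ℝ) / (k.factorial : ℝ)
    with hc
  have hcast : ∀ (S : Finset (Fin k)),
      ((S.card.factorial * (k - S.card - 1).factorial : ℝ) / (k.factorial : ℝ)) = c S.card := by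
    intro S; simp [hc]
  have hsplit : (∑ j : Fin k, ∑ S ∈ (Finset.univ \ {j}).powerset,
        ((S.card.factorial * (k - S.card - 1).factorial : ℝ) / (k.factorial : ℝ)) *
          (g S - g (insert j S)))
      = (∑ j : Fin k, ∑ S ∈ (Finset.univ \ {j}).powerset, c S.card * g S)
        - (∑ j : Fin k, ∑ S ∈ (Finset.univ \ {j}).powerset, c S.card * g (insert j S)) := by
    rw [← Finset.sum_sub_distrib]
    refine Finset.sum_congr rfl fun j _ => ?_
    rw [← Finset.sum_sub_distrib]
    refine Finset.sum_congr rfl fun S _ => ?_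
    rw [hcast]; ring
  rw [hsplit]
  have hA : (∑ j : Fin k, ∑ S ∈ (Finset.univ \ {j}).powerset, c S.card * g S)
      = ∑ S ∈ (Finset.univ : Finset (Fin k)).powerset,
          ((k - S.card : ℕ) : ℝ) * (c S.card * g S) := by
    rw [Finset.sum_comm' (s' := fun S => Finset.univ \ S)
      (t' := (Finset.univ : Finset (Fin k)).powerset) ?_]
    · refine Finset.sum_congr rfl fun S _ => ?_
      rw [Finset.sum_const, nsmul_eq_mul]
      congr 1
      rw [Finset.card_univ_diff, Fintype.card_fin]
    · intro j S
      simp only [Finset.mem_univ, true_and, Finset.mem_powerset, Finset.mem_sdiff,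
        Finset.subset_sdiff, Finset.disjoint_singleton_right, Finset.mem_singleton,
        Finset.subset_univ, and_comm]
  -- B : reindex inner sum by insert j, then swap
  have hBj : ∀ j : Fin k, (∑ S ∈ (Finset.univ \ {j}).powerset, c S.card * g (insert j S))
      = ∑ T ∈ (Finset.univ : Finset (Fin k)).powerset.filter (fun T => j ∈ T),
          c (T.card - 1) * g T := by
    intro j
    refine Finset.sum_nbij' (fun S => insert j S) (fun T => T.erase j) ?_ ?_ ?_ ?_ ?_
    · intro S hS
      simp only [Finset.mem_powerset, Finset.subset_sdiff] at hS
      simp [Finset.mem_filter]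
    · intro T hT
      simp only [Finset.mem_filter, Finset.mem_powerset] at hT
      simp only [Finset.mem_powerset, Finset.subset_sdiff, Finset.disjoint_singleton_right,
        Finset.mem_erase]
      exact ⟨Finset.subset_univ _, by simp⟩
    · intro S hS
      simp only [Finset.mem_powerset, Finset.subset_sdiff,
        Finset.disjoint_singleton_right] at hS
      exact Finset.erase_insert (by simpa using hS.2)
    · intro T hT
      simp only [Finset.mem_filter] at hT
      exact Finset.insert_erase hT.2
    · intro S hS
      simp only [Finset.mem_powerset, Finset.subset_sdiff,
        Finset.disjoint_singleton_right] at hS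
      congr 2
      rw [Finset.card_insert_of_notMem (by simpa using hS.2)]
      omega
  have hB : (∑ j : Fin k, ∑ S ∈ (Finset.univ \ {j}).powerset, c S.card * g (insert j S))
      = ∑ T ∈ (Finset.univ : Finset (Fin k)).powerset,
          (T.card : ℝ) * (c (T.card - 1) * g T) := by
    rw [Finset.sum_congr rfl (fun j _ => hBj j)]
    rw [Finset.sum_comm' (s' := fun T => T) (t' := (Finset.univ : Finset (Fin k)).powerset) ?_]
    · refine Finset.sum_congr rfl fun T _ => ?_
      rw [Finset.sum_const, nsmul_eq_mul]
    · intro j T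
      simp only [Finset.mem_univ, true_and, Finset.mem_filter, Finset.mem_powerset,
        Finset.subset_univ, true_and, and_comm]
  rw [hA, hB, ← Finset.sum_sub_distrib]
  -- now a single sum over the full powerset
  set e : Finset (Fin k) → ℝ := fun T =>
    ((k - T.card : ℕ) : ℝ) * (c T.card * g T) - (T.card : ℝ) * (c (T.card - 1) * g T) with he
  show ∑ T ∈ (Finset.univ : Finset (Fin k)).powerset, e T = g ∅ - g Finset.univ
  have hkfac : (k.factorial : ℝ) ≠ 0 := Nat.cast_ne_zero.mpr (Nat.factorial_ne_zero k)
  have hemp : e ∅ = g ∅ := by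
    simp only [he, Finset.card_empty, Nat.cast_zero, zero_mul, sub_zero, Nat.sub_zero, hc]
    have : k * Nat.factorial (k - 1) = Nat.factorial k := by
      have := Nat.mul_factorial_pred (n := k) (by omega)
      simpa using this
    rw [Nat.factorial_zero]
    field_simp
    rw [← this]
    push_cast
    ring
  have huniv : e Finset.univ = - g Finset.univ := by
    have hcard : (Finset.univ : Finset (Fin k)).card = k := by simp
    simp only [he, hcard, Nat.sub_self, Nat.cast_zero, zero_mul, zero_sub, hc]
    have h1 : k - (k - 1) - 1 = 0 := by omega
    rw [h1, Nat.factorial_zero]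
    have : k * Nat.factorial (k - 1) = Nat.factorial k := by
      have := Nat.mul_factorial_pred (n := k) (by omega); simpa using this
    field_simp
    rw [← this]
    push_cast
    ring
  have hmid : ∀ T ∈ ((Finset.univ : Finset (Fin k)).powerset.erase ∅).erase Finset.univ,
      e T = 0 := by
    intro T hT
    simp only [Finset.mem_erase] at hT
    obtain ⟨hTu, hTe, -⟩ := hT
    have h1 : 1 ≤ T.card := Finset.card_pos.mpr (Finset.nonempty_iff_ne_empty.mpr hTe)
    have h2 : T.card < k := by
      have := Finset.card_lt_card (Finset.ssubset_univ_iff.mpr hTu)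
      simpa using this
    set t := T.card
    have key : (k - t) * (t.factorial * (k - t - 1).factorial)
        = t * ((t-1).factorial * (k - (t-1) - 1).factorial) := by
      have e1 : (k - t) * (k - t - 1).factorial = (k - t).factorial := by
        have := Nat.mul_factorial_pred (n := k - t) (by omega)
        simpa using this
      have e2 : t * (t - 1).factorial = t.factorial := by
        have := Nat.mul_factorial_pred (n := t) (by omega)
        simpa using this
      have e3 : k - (t - 1) - 1 = k - t := by omega
      rw [e3]
      calc (k - t) * (t.factorial * (k - t - 1).factorial)
          = t.factorial * ((k - t) * (k - t - 1).factorial) := by ring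
        _ = t.factorial * (k - t).factorial := by rw [e1]
        _ = (t * (t-1).factorial) * (k - t).factorial := by rw [e2]
        _ = t * ((t-1).factorial * (k - t).factorial) := by ring
    have this' : ((k - t : ℕ) : ℝ) * c t - (t : ℝ) * c (t-1) = 0 := by
      simp only [hc]
      have keyR : (((k - t) * (t.factorial * (k - t - 1).factorial) : ℕ) : ℝ)
          = ((t * ((t-1).factorial * (k - (t-1) - 1).factorial) : ℕ) : ℝ) := by
        exact_mod_cast key
      push_cast at keyR
      field_simp
      push_cast
      linear_combination keyR
    have expand : e T = (((k - t : ℕ) : ℝ) * c t - (t : ℝ) * c (t-1)) * g T := by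
      simp only [he]; ring
    rw [expand, this', zero_mul]
  have h0mem : (∅ : Finset (Fin k)) ∈ (Finset.univ : Finset (Fin k)).powerset := by simp
  have hune : (Finset.univ : Finset (Fin k)) ≠ ∅ := by
    have : Nonempty (Fin k) := ⟨⟨0, by omega⟩⟩
    exact Finset.univ_nonempty.ne_empty
  have humem : (Finset.univ : Finset (Fin k)) ∈
      ((Finset.univ : Finset (Fin k)).powerset).erase ∅ := by
    simp [Finset.mem_erase, hune]
  rw [← Finset.add_sum_erase _ e h0mem, ← Finset.add_sum_erase _ e humem,
    Finset.sum_eq_zero hmid, add_zero, hemp, huniv]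
  ring

/-- The privilege score `π̂ x - φ̂ xt` decomposes into the sum of the Shapley-style
privilege score contributions plus the local intercept `π̂ xt - φ̂ xt`. -/
theorem ps_decomposition_local {k : ℕ} (hk : 1 ≤ k) {X : Type*}
    (pihat phihat : X → ℝ) (x xt : X)
    (w : Finset (Fin k) → X) (hw0 : w ∅ = x) (hwu : w Finset.univ = xt) :
    pihat x - phihat xt
      = (∑ j : Fin k, ∑ S ∈ (Finset.univ \ {j}).powerset,
          ((S.card.factorial * (k - S.card - 1).factorial : ℝ) / (k.factorial : ℝ)) *
            (pihat (w S) - pihat (w (insert j S))))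
        + (pihat xt - phihat xt) := by
  have := shapley_eff hk (fun S => pihat (w S))
  simp only [hw0, hwu] at this
  rw [this]
  ring
end

section
/- Let k ≥ 1, let X be a type, let π̂, φ̂ : X → ℝ, let x x̃ : X, and let w : Finset (Fin k) → X satisfy w(∅) = x and w(univ) = x̃. Define γ̃_j = ∑_{S ⊆ univ \ {j}} (|S|! (k − |S| − 1)! / k!) (φ̂(w(S)) − φ̂(w(S ∪ {j}))) for each j ∈ Fin k, and δ₀' = π̂(x) − φ̂(x). Then π̂(x) − φ̂(x̃) = ∑_{j ∈ Fin k} γ̃_j + δ₀'. -/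
open Finset

namespace PSDecomp

noncomputable def c (k t : ℕ) : ℝ := (t.factorial * (k - t - 1).factorial : ℝ) / k.factorial
noncomputable def f (k t : ℕ) : ℝ := (t.factorial * (k - t).factorial : ℝ) / k.factorial

lemma f_zero {k : ℕ} : f k 0 = 1 := by
  simp only [f, Nat.factorial_zero, Nat.sub_zero, Nat.cast_one, one_mul]
  exact div_self (by exact_mod_cast (Nat.factorial_pos k).ne')

lemma f_self {k : ℕ} : f k k = 1 := by
  simp only [f, Nat.sub_self, Nat.factorial_zero, Nat.cast_one, mul_one]
  exact div_self (by exact_mod_cast (Nat.factorial_pos k).ne')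

lemma c_mul {k t : ℕ} (ht : t < k) : ((k - t : ℕ) : ℝ) * c k t = f k t := by
  obtain ⟨m, hm⟩ : ∃ m, k - t = m + 1 := ⟨k - t - 1, by omega⟩
  have h1 : k - t - 1 = m := by omega
  unfold c f
  rw [hm, Nat.factorial_succ]
  simp only [Nat.add_sub_cancel]
  push_cast
  ring

lemma c_mul' {k t : ℕ} (ht : 1 ≤ t) : (t : ℝ) * c k (t - 1) = f k t := by
  obtain ⟨m, hm⟩ : ∃ m, t = m + 1 := ⟨t - 1, by omega⟩
  subst hm
  have h2 : k - m - 1 = k - (m + 1) := by omega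
  unfold c f
  simp only [Nat.add_sub_cancel, h2, Nat.factorial_succ]
  push_cast
  ring

lemma shapley {k : ℕ} (v : Finset (Fin k) → ℝ) :
    (∑ j : Fin k, ∑ S ∈ (univ \ {j}).powerset, c k S.card * (v S - v (insert j S)))
      = v ∅ - v univ := by
  have hcard : ∀ S : Finset (Fin k), Sᶜ.card = k - S.card := by
    intro S; rw [Finset.card_compl, Fintype.card_fin]
  have hswap : (∑ j : Fin k, ∑ S ∈ (univ \ {j}).powerset, c k S.card * (v S - v (insert j S)))
      = ∑ S ∈ (univ : Finset (Fin k)).powerset, ∑ j ∈ Sᶜ, c k S.card * (v S - v (insert j S)) := by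
    apply Finset.sum_comm'
    intro j S
    simp only [Finset.mem_univ, true_and, Finset.mem_powerset, Finset.subset_sdiff,
      Finset.subset_univ, Finset.disjoint_singleton_right, Finset.mem_compl, and_true, true_iff]
  rw [hswap]
  simp only [mul_sub, Finset.sum_sub_distrib]
  -- the first sum
  have hA : (∑ S ∈ (univ : Finset (Fin k)).powerset, ∑ _j ∈ Sᶜ, c k S.card * v S)
      = (∑ S ∈ (univ : Finset (Fin k)).powerset, f k S.card * v S) - v univ := by
    have step : ∀ S ∈ (univ : Finset (Fin k)).powerset,
        (∑ _j ∈ Sᶜ, c k S.card * v S) = ((k - S.card : ℕ) : ℝ) * c k S.card * v S := by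
      intro S _
      rw [Finset.sum_const, hcard S, nsmul_eq_mul, mul_assoc]
    rw [Finset.sum_congr rfl step]
    have key : (∑ S ∈ (univ : Finset (Fin k)).powerset,
        (f k S.card * v S - ((k - S.card : ℕ) : ℝ) * c k S.card * v S)) = v univ := by
      rw [Finset.sum_eq_single (univ : Finset (Fin k))]
      · rw [Finset.card_univ, Fintype.card_fin, f_self, Nat.sub_self]
        push_cast; ring
      · intro S hS hne
        have hlt : S.card < k := by
          have hsub : S ⊆ univ := Finset.mem_powerset.mp hS
          have := Finset.card_lt_card (lt_of_le_of_ne hsub (by simpa using hne))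
          simpa [Finset.card_univ] using this
        rw [c_mul hlt]; ring
      · intro h; exact absurd (Finset.mem_powerset.mpr (Finset.Subset.refl _)) h
    rw [Finset.sum_sub_distrib] at key
    linarith [key]
  -- the second sum, reindexed
  have hB : (∑ S ∈ (univ : Finset (Fin k)).powerset, ∑ j ∈ Sᶜ, c k S.card * v (insert j S))
      = (∑ S ∈ (univ : Finset (Fin k)).powerset, f k S.card * v S) - v ∅ := by
    have hre : (∑ S ∈ (univ : Finset (Fin k)).powerset, ∑ j ∈ Sᶜ, c k S.card * v (insert j S))
        = ∑ T ∈ (univ : Finset (Fin k)).powerset, ∑ _j ∈ T, c k (T.card - 1) * v T := by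
      rw [Finset.sum_sigma', Finset.sum_sigma']
      refine Finset.sum_nbij' (fun p => ⟨insert p.2 p.1, p.2⟩) (fun p => ⟨p.1.erase p.2, p.2⟩)
        ?_ ?_ ?_ ?_ ?_
      · rintro ⟨S, j⟩ hp
        simp only [Finset.mem_sigma, Finset.mem_powerset, Finset.mem_compl] at hp ⊢
        exact ⟨Finset.subset_univ _, Finset.mem_insert_self _ _⟩
      · rintro ⟨T, j⟩ hp
        simp only [Finset.mem_sigma, Finset.mem_powerset, Finset.mem_compl] at hp ⊢
        exact ⟨Finset.subset_univ _, Finset.notMem_erase _ _⟩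
      · rintro ⟨S, j⟩ hp
        simp only [Finset.mem_sigma, Finset.mem_powerset, Finset.mem_compl] at hp
        simp [Finset.erase_insert hp.2]
      · rintro ⟨T, j⟩ hp
        simp only [Finset.mem_sigma, Finset.mem_powerset] at hp
        simp [Finset.insert_erase hp.2]
      · rintro ⟨S, j⟩ hp
        simp only [Finset.mem_sigma, Finset.mem_powerset, Finset.mem_compl] at hp
        rw [Finset.card_insert_of_notMem hp.2]
        simp
    rw [hre]
    have step : ∀ T ∈ (univ : Finset (Fin k)).powerset,
        (∑ _j ∈ T, c k (T.card - 1) * v T) = (T.card : ℝ) * c k (T.card - 1) * v T := by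
      intro T _
      rw [Finset.sum_const, nsmul_eq_mul, mul_assoc]
    rw [Finset.sum_congr rfl step]
    have key : (∑ T ∈ (univ : Finset (Fin k)).powerset,
        (f k T.card * v T - (T.card : ℝ) * c k (T.card - 1) * v T)) = v ∅ := by
      rw [Finset.sum_eq_single (∅ : Finset (Fin k))]
      · simp [f_zero]
      · intro T hT hne
        have h1 : 1 ≤ T.card := Finset.card_pos.mpr (Finset.nonempty_iff_ne_empty.mpr hne)
        rw [c_mul' h1]; ring
      · intro h; exact absurd (Finset.mem_powerset.mpr (Finset.empty_subset _)) h
    rw [Finset.sum_sub_distrib] at key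
    linarith [key]
  rw [hA, hB]
  ring

end PSDecomp

/-- Alternative decomposition of the privilege score via warped-world privilege
score contributions plus the intercept `π̂ x - φ̂ x`. -/
theorem ps_decomposition_warped {k : ℕ} (hk : 1 ≤ k) {X : Type*}
    (pihat phihat : X → ℝ) (x xt : X)
    (w : Finset (Fin k) → X) (hw0 : w ∅ = x) (hwu : w Finset.univ = xt) :
    pihat x - phihat xt
      = (∑ j : Fin k, ∑ S ∈ (Finset.univ \ {j}).powerset,
          ((S.card.factorial * (k - S.card - 1).factorial : ℝ) / (k.factorial : ℝ)) *
            (phihat (w S) - phihat (w (insert j S))))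
        + (pihat x - phihat x) := by
  have h := PSDecomp.shapley (fun S => phihat (w S))
  simp only [hw0, hwu] at h
  have : (∑ j : Fin k, ∑ S ∈ (Finset.univ \ {j}).powerset,
          ((S.card.factorial * (k - S.card - 1).factorial : ℝ) / (k.factorial : ℝ)) *
            (phihat (w S) - phihat (w (insert j S)))) = phihat x - phihat xt := by
    rw [← h]; rfl
  rw [this]; ring
end

section
/- Let k ≥ 1, let X be a type, let π̂, φ̂ : X → ℝ, let x x̃ : X, let w : Finset (Fin k) → X satisfy w(∅) = x and w(univ) = x̃, and let p̄, q̄ : ℝ be arbitrary real constants (the training-data averages of π̂ and φ̂). Define γ_j = ∑_{S ⊆ univ \ {j}} (|S|! (k − |S| − 1)! / k!) (π̂(w(S)) − π̂(w(S ∪ {j}))), the global intercept δ_g = p̄ − q̄, and the individual intercept δ_{x̃} = (π̂(x̃) − p̄) − (φ̂(x̃) − q̄). Then π̂(x) − φ̂(x̃) = δ_g + δ_{x̃} + ∑_{j ∈ Fin k} γ_j. -/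
open Finset

noncomputable def shapC (k s : ℕ) : ℝ :=
  (s.factorial * (k - s - 1).factorial : ℝ) / (k.factorial : ℝ)

lemma swap1 {k : ℕ} (f : Fin k → Finset (Fin k) → ℝ) :
    ∑ j : Fin k, ∑ S ∈ (Finset.univ \ {j}).powerset, f j S
      = ∑ S ∈ (Finset.univ : Finset (Fin k)).powerset, ∑ j ∈ Finset.univ \ S, f j S := by
  apply Finset.sum_comm'
  intro j S
  simp [Finset.subset_sdiff, Finset.disjoint_singleton_right]

lemma reindex {k : ℕ} (j : Fin k) (g : Finset (Fin k) → ℝ) :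
    ∑ S ∈ (Finset.univ \ {j}).powerset, g (insert j S)
      = ∑ T ∈ (Finset.univ : Finset (Fin k)).powerset.filter (fun T => j ∈ T), g T := by
  apply Finset.sum_nbij' (fun S => insert j S) (fun T => T.erase j)
  · intro S hS
    simp
  · intro T hT
    simp [Finset.subset_sdiff, Finset.disjoint_singleton_right]
  · intro S hS
    simp [Finset.subset_sdiff, Finset.disjoint_singleton_right] at hS
    exact Finset.erase_insert (by simpa using hS)
  · intro T hT
    simp at hT
    exact Finset.insert_erase hT
  · intro S hS; rfl

lemma swap2 {k : ℕ} (g : Fin k → Finset (Fin k) → ℝ) :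
    ∑ j : Fin k, ∑ T ∈ (Finset.univ : Finset (Fin k)).powerset.filter (fun T => j ∈ T), g j T
      = ∑ T ∈ (Finset.univ : Finset (Fin k)).powerset, ∑ j ∈ T, g j T := by
  apply Finset.sum_comm'
  intro j T
  simp

lemma coef_empty {k : ℕ} (hk : 1 ≤ k) : (k : ℝ) * shapC k 0 = 1 := by
  have hkfac : (k.factorial : ℝ) ≠ 0 := Nat.cast_ne_zero.mpr k.factorial_ne_zero
  have hnat : (k : ℝ) * ((k-1).factorial : ℝ) = (k.factorial : ℝ) := by
    exact_mod_cast congrArg (Nat.cast : ℕ → ℝ) (Nat.mul_factorial_pred (by omega))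
  simp only [shapC, Nat.factorial_zero, Nat.cast_one, one_mul, Nat.sub_zero]
  field_simp
  linarith [hnat]

lemma coef_univ {k : ℕ} (hk : 1 ≤ k) : (k : ℝ) * shapC k (k - 1) = 1 := by
  have hkfac : (k.factorial : ℝ) ≠ 0 := Nat.cast_ne_zero.mpr k.factorial_ne_zero
  have hnat : (k : ℝ) * ((k-1).factorial : ℝ) = (k.factorial : ℝ) := by
    exact_mod_cast congrArg (Nat.cast : ℕ → ℝ) (Nat.mul_factorial_pred (by omega))
  have h0 : k - (k - 1) - 1 = 0 := by omega
  simp only [shapC, h0, Nat.factorial_zero, Nat.cast_one, mul_one]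
  field_simp
  linarith [hnat]

lemma coef_eq {k : ℕ} (hk : 1 ≤ k) (T : Finset (Fin k)) :
    ((k : ℝ) - T.card) * shapC k T.card - (T.card : ℝ) * shapC k (T.card - 1)
      = if T = ∅ then 1 else if T = Finset.univ then -1 else 0 := by
  have hkfac : (k.factorial : ℝ) ≠ 0 := Nat.cast_ne_zero.mpr k.factorial_ne_zero
  have hs : T.card ≤ k := by simpa using Finset.card_le_univ T
  by_cases h0 : T = ∅
  · subst h0
    simp only [Finset.card_empty, Nat.cast_zero, sub_zero, zero_mul, sub_zero, if_pos rfl]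
    exact coef_empty hk
  · by_cases h1 : T = Finset.univ
    · subst h1
      have hcard : (Finset.univ : Finset (Fin k)).card = k := by simp
      rw [hcard]
      rw [if_neg h0, if_pos rfl]
      have : shapC k k = 1 := by
        have : k - k - 1 = 0 := by omega
        simp [shapC, this, hkfac]
      rw [this]
      have := coef_univ hk
      linarith [this]
    · rw [if_neg h0, if_neg h1]
      have hs1 : 1 ≤ T.card := Finset.card_pos.mpr (Finset.nonempty_iff_ne_empty.mpr h0)
      have hsk : T.card < k := by
        have := Finset.card_lt_card (Finset.ssubset_univ_iff.mpr h1)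
        simpa using this
      set s := T.card with hsdef
      have hksub : k - (s - 1) - 1 = k - s := by omega
      have h1' : (k - s) * (k - s - 1).factorial = (k - s).factorial :=
        Nat.mul_factorial_pred (by omega)
      have h2' : s * (s - 1).factorial = s.factorial :=
        Nat.mul_factorial_pred (by omega)
      simp only [shapC, hksub]
      have hcast : ((k : ℝ) - s) = ((k - s : ℕ) : ℝ) := by
        rw [Nat.cast_sub hsk.le]
      rw [hcast]
      have key : ((k - s : ℕ) : ℝ) * ((s.factorial : ℝ) * ((k - s - 1).factorial : ℝ))
          = (s : ℝ) * (((s-1).factorial : ℝ) * ((k - s).factorial : ℝ)) := by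
        have e1 : ((k - s : ℕ) : ℝ) * ((k - s - 1).factorial : ℝ) = ((k-s).factorial : ℝ) := by
          exact_mod_cast congrArg (Nat.cast : ℕ → ℝ) h1'
        have e2 : (s : ℝ) * ((s-1).factorial : ℝ) = (s.factorial : ℝ) := by
          exact_mod_cast congrArg (Nat.cast : ℕ → ℝ) h2'
        calc ((k - s : ℕ) : ℝ) * ((s.factorial : ℝ) * ((k - s - 1).factorial : ℝ))
            = (s.factorial : ℝ) * (((k - s : ℕ) : ℝ) * ((k - s - 1).factorial : ℝ)) := by ring
          _ = (s.factorial : ℝ) * ((k-s).factorial : ℝ) := by rw [e1]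
          _ = ((s : ℝ) * ((s-1).factorial : ℝ)) * ((k - s).factorial : ℝ) := by rw [e2]
          _ = (s : ℝ) * (((s-1).factorial : ℝ) * ((k - s).factorial : ℝ)) := by ring
      field_simp
      linear_combination key

theorem shapley_telescope {k : ℕ} (hk : 1 ≤ k) (v : Finset (Fin k) → ℝ) :
    ∑ j : Fin k, ∑ S ∈ (Finset.univ \ {j}).powerset,
        shapC k S.card * (v S - v (insert j S)) = v ∅ - v Finset.univ := by
  have hnem : (Finset.univ : Finset (Fin k)).Nonempty := ⟨⟨0, hk⟩, Finset.mem_univ _⟩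
  have hne : (∅ : Finset (Fin k)) ≠ Finset.univ := fun h => hnem.ne_empty h.symm
  have h1 : ∀ j : Fin k, ∑ S ∈ (Finset.univ \ {j}).powerset,
      shapC k S.card * (v S - v (insert j S))
      = (∑ S ∈ (Finset.univ \ {j}).powerset, shapC k S.card * v S)
        - (∑ S ∈ (Finset.univ \ {j}).powerset, shapC k S.card * v (insert j S)) := by
    intro j
    rw [← Finset.sum_sub_distrib]
    exact Finset.sum_congr rfl (fun S _ => by ring)
  simp_rw [h1]
  rw [Finset.sum_sub_distrib]
  rw [swap1 (fun j S => shapC k S.card * v S)]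
  have h2 : ∀ j : Fin k, ∑ S ∈ (Finset.univ \ {j}).powerset, shapC k S.card * v (insert j S)
      = ∑ T ∈ (Finset.univ : Finset (Fin k)).powerset.filter (fun T => j ∈ T),
          shapC k (T.card - 1) * v T := by
    intro j
    rw [← reindex j (fun T => shapC k (T.card - 1) * v T)]
    apply Finset.sum_congr rfl
    intro S hS
    simp only [Finset.mem_powerset, Finset.subset_sdiff, Finset.disjoint_singleton_right] at hS
    rw [Finset.card_insert_of_notMem (by simpa using hS.2)]
    simp
  simp_rw [h2]
  rw [swap2 (fun j T => shapC k (T.card - 1) * v T)]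
  have h3 : ∀ S ∈ (Finset.univ : Finset (Fin k)).powerset,
      ∑ j ∈ Finset.univ \ S, shapC k S.card * v S
        = ((k:ℝ) - S.card) * (shapC k S.card * v S) := by
    intro S hS
    rw [Finset.sum_const, Finset.card_sdiff_of_subset (Finset.subset_univ S), Finset.card_univ,
      Fintype.card_fin, nsmul_eq_mul, Nat.cast_sub (by simpa using Finset.card_le_univ S)]
  have h4 : ∀ T ∈ (Finset.univ : Finset (Fin k)).powerset,
      ∑ j ∈ T, shapC k (T.card - 1) * v T = (T.card : ℝ) * (shapC k (T.card - 1) * v T) := by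
    intro T hT
    rw [Finset.sum_const, nsmul_eq_mul]
  rw [Finset.sum_congr rfl h3, Finset.sum_congr rfl h4, ← Finset.sum_sub_distrib]
  have h5 : ∀ T ∈ (Finset.univ : Finset (Fin k)).powerset,
      ((k:ℝ) - T.card) * (shapC k T.card * v T) - (T.card : ℝ) * (shapC k (T.card - 1) * v T)
      = (if T = ∅ then v T else 0) + (if T = Finset.univ then -v T else 0) := by
    intro T hT
    have hc := coef_eq hk T
    by_cases h0 : T = ∅
    · subst h0
      simp only [if_pos rfl, if_neg hne, if_true] at hc ⊢
      linear_combination v (∅ : Finset (Fin k)) * hc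
    · by_cases h1' : T = Finset.univ
      · subst h1'
        simp only [if_neg h0, if_pos rfl, if_true] at hc ⊢
        linear_combination v (Finset.univ : Finset (Fin k)) * hc
      · simp only [if_neg h0, if_neg h1'] at hc ⊢
        linear_combination v T * hc
  rw [Finset.sum_congr rfl h5, Finset.sum_add_distrib]
  rw [Finset.sum_ite_eq' _ (∅ : Finset (Fin k)) v]
  rw [Finset.sum_ite_eq' _ (Finset.univ : Finset (Fin k)) (fun T => -v T)]
  simp
  ring

/-- Refined decomposition of the privilege score into a global intercept,
an individual intercept, and the privilege score contributions. -/
theorem ps_decomposition_global_individual {k : ℕ} (hk : 1 ≤ k) {X : Type*}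
    (pihat phihat : X → ℝ) (x xt : X)
    (w : Finset (Fin k) → X) (hw0 : w ∅ = x) (hwu : w Finset.univ = xt)
    (pbar qbar : ℝ) :
    pihat x - phihat xt
      = (pbar - qbar) + ((pihat xt - pbar) - (phihat xt - qbar))
        + (∑ j : Fin k, ∑ S ∈ (Finset.univ \ {j}).powerset,
            ((S.card.factorial * (k - S.card - 1).factorial : ℝ) / (k.factorial : ℝ)) *
              (pihat (w S) - pihat (w (insert j S)))) := by
  have key := shapley_telescope hk (fun S => pihat (w S))
  simp only [shapC] at key
  rw [hw0, hwu] at key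
  rw [key]
  ring
end
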